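/- For any nonnegative n×n matrix A and index i, the map t ↦ ρ_{e_i}(A^{(t)})^{1/t} is decreasing on (0,∞), and r_{e_i}(A) = inf_{t>0} ρ_{e_i}(A^{(t)})^{1/t} = sup_{t>0} (n^{-1} ρ_{e_i}(A^{(t)}))^{1/t}. -/

import Mathlib

open Filter Finset

noncomputable section

/-- Max-algebra product of matrices: `(A ⊗ B) i j = max_l A i l * B l j`. -/
def maxMul {n : ℕ} (A B : Matrix (Fin n) (Fin n) ℝ) : Matrix (Fin n) (Fin n) ℝ :=
  fun i j => ⨆ l, A i l * B l j

/-- Max-algebra powers `A^k_⊗`. -/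
def maxPow {n : ℕ} (A : Matrix (Fin n) (Fin n) ℝ) : ℕ → Matrix (Fin n) (Fin n) ℝ
  | 0 => fun i j => if i = j then 1 else 0
  | k + 1 => maxMul (maxPow A k) A

/-- Max-algebra action of a matrix on a vector: `(A ⊗ x) i = max_j A i j * x j`. -/
def maxVecMul {n : ℕ} (A : Matrix (Fin n) (Fin n) ℝ) (x : Fin n → ℝ) : Fin n → ℝ :=
  fun i => ⨆ j, A i j * x j

/-- Max norm of a vector: `‖x‖ = max_i x i`. -/
def vnorm {n : ℕ} (x : Fin n → ℝ) : ℝ := ⨆ i, x i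

/-- Max entry norm of a matrix: `‖A‖ = max_{i,j} A i j`. -/
def matNorm {n : ℕ} (A : Matrix (Fin n) (Fin n) ℝ) : ℝ := ⨆ i, ⨆ j, A i j

/-- Max-algebra local spectral radius `r_x(A) = lim_k ‖A^k_⊗ ⊗ x‖^{1/k}`
(the limit exists, so we may define it as the `limsup`). -/
def rloc {n : ℕ} (A : Matrix (Fin n) (Fin n) ℝ) (x : Fin n → ℝ) : ℝ :=
  Filter.atTop.limsup fun k : ℕ => (vnorm (maxVecMul (maxPow A k) x)) ^ ((k : ℝ)⁻¹)

/-- Classical local spectral radius `ρ_x(A) = limsup_k ‖A^k x‖^{1/k}`. -/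
def rhox {n : ℕ} (A : Matrix (Fin n) (Fin n) ℝ) (x : Fin n → ℝ) : ℝ :=
  Filter.atTop.limsup fun k : ℕ => (vnorm ((A ^ k).mulVec x)) ^ ((k : ℝ)⁻¹)

/-- Hadamard (entrywise) power `A^{(t)} = [a_{ij}^t]`. -/
def hadPow {n : ℕ} (A : Matrix (Fin n) (Fin n) ℝ) (t : ℝ) : Matrix (Fin n) (Fin n) ℝ :=
  fun i j => (A i j) ^ t

/-- The `i`-th standard basis vector. -/
def e {n : ℕ} (i : Fin n) : Fin n → ℝ := fun j => if j = i then 1 else 0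

end

section StmtAux

variable {n : ℕ} {A : Matrix (Fin n) (Fin n) ℝ}

private lemma le_csup' (g : Fin n → ℝ) (j : Fin n) : g j ≤ ⨆ l, g l :=
  le_ciSup (Set.finite_range g).bddAbove j

private lemma csup_attained' [Nonempty (Fin n)] (g : Fin n → ℝ) : ∃ j, (⨆ l, g l) = g j := by
  obtain ⟨j, hj⟩ := Finite.exists_max g
  exact ⟨j, le_antisymm (ciSup_le hj) (le_csup' g j)⟩

private def maxMulAux {n : ℕ} (A : Matrix (Fin n) (Fin n) ℝ) := A

private lemma maxPow_succ_apply (k : ℕ) (j l : Fin n) :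
    maxPow A (k + 1) j l = ⨆ m, maxPow A k j m * A m l := rfl

private lemma maxPow_nonneg (hA : ∀ i j, 0 ≤ A i j) : ∀ k j l, 0 ≤ maxPow A k j l := by
  intro k
  induction k with
  | zero => intro j l; simp only [maxPow]; split <;> norm_num
  | succ k ih =>
    intro j l
    haveI : Nonempty (Fin n) := ⟨j⟩
    calc (0:ℝ) ≤ maxPow A k j j * A j l := mul_nonneg (ih j j) (hA j l)
    _ ≤ _ := by rw [maxPow_succ_apply]; exact le_csup' (fun m => maxPow A k j m * A m l) j

private lemma maxPow_le {C : ℝ} (hA : ∀ i j, 0 ≤ A i j) (hC1 : 1 ≤ C)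
    (hC : ∀ j l, A j l ≤ C) : ∀ k j l, maxPow A k j l ≤ C ^ k := by
  intro k
  have hC0 : (0:ℝ) ≤ C := zero_le_one.trans hC1
  induction k with
  | zero => intro j l; simp only [maxPow, pow_zero]; split <;> norm_num
  | succ k ih =>
    intro j l
    haveI : Nonempty (Fin n) := ⟨j⟩
    rw [maxPow_succ_apply, pow_succ]
    exact ciSup_le fun m => mul_le_mul (ih j m) (hC m l) (hA m l) (pow_nonneg hC0 k)

private lemma hadPow_pow_nonneg (hA : ∀ i j, 0 ≤ A i j) (t : ℝ) :
    ∀ k j l, 0 ≤ (hadPow A t ^ k) j l := by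
  intro k
  induction k with
  | zero => intro j l; rw [pow_zero, Matrix.one_apply]; split <;> norm_num
  | succ k ih =>
    intro j l
    rw [pow_succ, Matrix.mul_apply]
    exact Finset.sum_nonneg fun m _ => mul_nonneg (ih j m) (Real.rpow_nonneg (hA m l) t)

private lemma maxPow_rpow_le (hA : ∀ i j, 0 ≤ A i j) {t : ℝ} (ht : 0 < t) :
    ∀ k j l, maxPow A k j l ^ t ≤ (hadPow A t ^ k) j l := by
  intro k
  induction k with
  | zero =>
    intro j l
    rw [pow_zero, Matrix.one_apply]
    simp only [maxPow]
    split
    · rw [Real.one_rpow]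
    · rw [Real.zero_rpow ht.ne']
  | succ k ih =>
    intro j l
    haveI : Nonempty (Fin n) := ⟨j⟩
    rw [maxPow_succ_apply]
    obtain ⟨m, hm⟩ := csup_attained' (fun m => maxPow A k j m * A m l)
    rw [hm, Real.mul_rpow (maxPow_nonneg hA k j m) (hA m l)]
    calc maxPow A k j m ^ t * A m l ^ t
        ≤ (hadPow A t ^ k) j m * A m l ^ t :=
          mul_le_mul_of_nonneg_right (ih j m) (Real.rpow_nonneg (hA m l) t)
      _ ≤ ∑ m', (hadPow A t ^ k) j m' * (hadPow A t) m' l :=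
          Finset.single_le_sum (f := fun m' => (hadPow A t ^ k) j m' * (hadPow A t) m' l)
            (fun m' _ => mul_nonneg (hadPow_pow_nonneg hA t k j m')
              (Real.rpow_nonneg (hA m' l) t)) (Finset.mem_univ m)
      _ = (hadPow A t ^ (k+1)) j l := by rw [pow_succ, Matrix.mul_apply]

private lemma hadPow_pow_le (hA : ∀ i j, 0 ≤ A i j) {t : ℝ} (ht : 0 < t) :
    ∀ k j l, (hadPow A t ^ k) j l ≤ (n:ℝ) ^ k * maxPow A k j l ^ t := by
  intro k
  induction k with
  | zero =>
    intro j l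
    rw [pow_zero, pow_zero, Matrix.one_apply, one_mul]
    simp only [maxPow]
    split
    · rw [Real.one_rpow]
    · rw [Real.zero_rpow ht.ne']
  | succ k ih =>
    intro j l
    haveI : Nonempty (Fin n) := ⟨j⟩
    rw [pow_succ, Matrix.mul_apply]
    have h1 : ∀ m, (hadPow A t ^ k) j m * (hadPow A t) m l
        ≤ (n:ℝ) ^ k * (maxPow A (k+1) j l) ^ t := by
      intro m
      calc (hadPow A t ^ k) j m * (hadPow A t) m l
          ≤ ((n:ℝ) ^ k * maxPow A k j m ^ t) * A m l ^ t :=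
            mul_le_mul_of_nonneg_right (ih j m) (Real.rpow_nonneg (hA m l) t)
        _ = (n:ℝ) ^ k * (maxPow A k j m * A m l) ^ t := by
            rw [Real.mul_rpow (maxPow_nonneg hA k j m) (hA m l)]; ring
        _ ≤ (n:ℝ) ^ k * (maxPow A (k+1) j l) ^ t := by
            apply mul_le_mul_of_nonneg_left _ (by positivity)
            apply Real.rpow_le_rpow (mul_nonneg (maxPow_nonneg hA k j m) (hA m l)) _ ht.le
            rw [maxPow_succ_apply]
            exact le_csup' (fun m' => maxPow A k j m' * A m' l) m
    calc ∑ m, (hadPow A t ^ k) j m * (hadPow A t) m l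
        ≤ ∑ _m : Fin n, (n:ℝ) ^ k * (maxPow A (k+1) j l) ^ t :=
          Finset.sum_le_sum fun m _ => h1 m
      _ = (n:ℝ) ^ (k+1) * (maxPow A (k+1) j l) ^ t := by
          rw [Finset.sum_const, Finset.card_univ, Fintype.card_fin, nsmul_eq_mul, pow_succ]
          ring

private lemma rpow_add_rpow_le' {x y r : ℝ} (hx : 0 ≤ x) (hy : 0 ≤ y) (hr : 1 ≤ r) :
    x ^ r + y ^ r ≤ (x + y) ^ r := by
  have hr0 : (0:ℝ) < r := lt_of_lt_of_le one_pos hr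
  have key : ∀ a : ℝ, 0 ≤ a → a ≤ x + y → a ^ r ≤ (x + y) ^ (r - 1) * a := by
    intro a ha hale
    rcases eq_or_lt_of_le ha with h | h
    · rw [← h, Real.zero_rpow hr0.ne', mul_zero]
    · have ha' : a ^ r = a ^ (r - 1) * a := by
        rw [show r = (r - 1) + 1 by ring, Real.rpow_add_one h.ne']
        ring_nf
      rw [ha']
      exact mul_le_mul_of_nonneg_right
        (Real.rpow_le_rpow h.le hale (by linarith)) h.le
  calc x ^ r + y ^ r
      ≤ (x + y) ^ (r - 1) * x + (x + y) ^ (r - 1) * y :=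
        add_le_add (key x hx (le_add_of_nonneg_right hy)) (key y hy (le_add_of_nonneg_left hx))
    _ = (x + y) ^ (r - 1) * (x + y) := by ring
    _ = (x + y) ^ r := by
        rcases eq_or_lt_of_le (add_nonneg hx hy) with h | h
        · rw [← h, mul_zero, Real.zero_rpow hr0.ne']
        · rw [show r = (r - 1) + 1 by ring, Real.rpow_add_one h.ne']
          ring_nf

private lemma sum_rpow_le_rpow_sum {ι : Type*} (s : Finset ι) (y : ι → ℝ)
    (hy : ∀ m ∈ s, 0 ≤ y m) {r : ℝ} (hr : 1 ≤ r) :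
    ∑ m ∈ s, y m ^ r ≤ (∑ m ∈ s, y m) ^ r := by
  have hr0 : (0:ℝ) < r := lt_of_lt_of_le one_pos hr
  induction s using Finset.cons_induction with
  | empty => simp [Real.zero_rpow hr0.ne']
  | cons a s ha ih =>
    rw [Finset.sum_cons, Finset.sum_cons]
    have h1 : 0 ≤ y a := hy a (Finset.mem_cons_self a s)
    have h2 : ∀ m ∈ s, 0 ≤ y m := fun m hm => hy m (Finset.mem_cons.mpr (Or.inr hm))
    calc y a ^ r + ∑ m ∈ s, y m ^ r
        ≤ y a ^ r + (∑ m ∈ s, y m) ^ r := add_le_add le_rfl (ih h2)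
      _ ≤ (y a + ∑ m ∈ s, y m) ^ r :=
          rpow_add_rpow_le' h1 (Finset.sum_nonneg h2) hr

private lemma hadPow_pow_anti (hA : ∀ i j, 0 ≤ A i j) {s t : ℝ} (hs : 0 < s) (hst : s ≤ t) :
    ∀ k j l, (hadPow A t ^ k) j l ≤ ((hadPow A s ^ k) j l) ^ (t / s) := by
  have hr : 1 ≤ t / s := (one_le_div hs).2 hst
  have hr0 : (0:ℝ) < t / s := lt_of_lt_of_le one_pos hr
  intro k
  induction k with
  | zero =>
    intro j l
    rw [pow_zero, pow_zero, Matrix.one_apply]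
    split
    · rw [Real.one_rpow]
    · rw [Real.zero_rpow hr0.ne']
  | succ k ih =>
    intro j l
    rw [pow_succ, pow_succ, Matrix.mul_apply, Matrix.mul_apply]
    have h1 : ∀ m, (hadPow A t ^ k) j m * (hadPow A t) m l
        ≤ ((hadPow A s ^ k) j m * (hadPow A s) m l) ^ (t / s) := by
      intro m
      have hA' : (hadPow A t) m l = ((hadPow A s) m l) ^ (t / s) := by
        show A m l ^ t = (A m l ^ s) ^ (t / s)
        rw [← Real.rpow_mul (hA m l)]
        congr 1
        field_simp
      have hmul := Real.mul_rpow (z := t / s) (hadPow_pow_nonneg hA s k j m)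
        (show (0:ℝ) ≤ hadPow A s m l from Real.rpow_nonneg (hA m l) s)
      rw [hA', hmul]
      exact mul_le_mul_of_nonneg_right (ih j m)
        (Real.rpow_nonneg (Real.rpow_nonneg (hA m l) s) _)
    calc ∑ m, (hadPow A t ^ k) j m * (hadPow A t) m l
        ≤ ∑ m, ((hadPow A s ^ k) j m * (hadPow A s) m l) ^ (t / s) :=
          Finset.sum_le_sum fun m _ => h1 m
      _ ≤ (∑ m, (hadPow A s ^ k) j m * (hadPow A s) m l) ^ (t / s) :=
          sum_rpow_le_rpow_sum _ _ (fun m _ => mul_nonneg (hadPow_pow_nonneg hA s k j m)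
            (Real.rpow_nonneg (hA m l) s)) hr

private lemma rloc_eq (hA : ∀ i j, 0 ≤ A i j) (i : Fin n) :
    rloc A (e i) = Filter.atTop.limsup fun k : ℕ => (⨆ j, maxPow A k j i) ^ ((k:ℝ)⁻¹) := by
  haveI : Nonempty (Fin n) := ⟨i⟩
  have h : ∀ k, vnorm (maxVecMul (maxPow A k) (e i)) = ⨆ j, maxPow A k j i := by
    intro k
    unfold vnorm
    congr 1
    funext j
    show (⨆ l, maxPow A k j l * e i l) = maxPow A k j i
    apply le_antisymm
    · apply ciSup_le
      intro l
      by_cases h : l = i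
      · subst h; simp [e]
      · simp [e, h, maxPow_nonneg hA k j i]
    · have := le_csup' (fun l => maxPow A k j l * e i l) i
      simpa [e] using this
  simp only [rloc, h]

private lemma rhox_eq (i : Fin n) (t : ℝ) :
    rhox (hadPow A t) (e i)
      = Filter.atTop.limsup fun k : ℕ => (⨆ j, (hadPow A t ^ k) j i) ^ ((k:ℝ)⁻¹) := by
  have h : ∀ k, vnorm ((hadPow A t ^ k).mulVec (e i)) = ⨆ j, (hadPow A t ^ k) j i := by
    intro k
    unfold vnorm
    congr 1
    funext j
    show ∑ l, (hadPow A t ^ k) j l * e i l = (hadPow A t ^ k) j i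
    simp [e, mul_ite, mul_one, mul_zero]
  simp only [rhox, h]

end StmtAux

section StmtMid

variable {n : ℕ} {A : Matrix (Fin n) (Fin n) ℝ}

private noncomputable def bseq (A : Matrix (Fin n) (Fin n) ℝ) (i : Fin n) (k : ℕ) : ℝ :=
  (⨆ j, maxPow A k j i) ^ ((k:ℝ)⁻¹)

private noncomputable def fseq (A : Matrix (Fin n) (Fin n) ℝ) (i : Fin n) (t : ℝ) (k : ℕ) : ℝ :=
  (⨆ j, (hadPow A t ^ k) j i) ^ ((k:ℝ)⁻¹)

private lemma rloc_eq_b (hA : ∀ i j, 0 ≤ A i j) (i : Fin n) :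
    rloc A (e i) = Filter.atTop.limsup (bseq A i) := rloc_eq hA i

private lemma rhox_eq_f (i : Fin n) (t : ℝ) :
    rhox (hadPow A t) (e i) = Filter.atTop.limsup (fseq A i t) := rhox_eq i t

private lemma rpow_swap (x a c : ℝ) (hx : 0 ≤ x) : (x ^ a) ^ c = (x ^ c) ^ a := by
  rw [← Real.rpow_mul hx, mul_comm, Real.rpow_mul hx]

private lemma pow_root (x : ℝ) {k : ℕ} (hx : 0 ≤ x) (hk : 1 ≤ k) :
    ((x ^ k : ℝ)) ^ ((k:ℝ)⁻¹) = x := by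
  have hkne : ((k:ℝ)) ≠ 0 := Nat.cast_ne_zero.2 (by omega)
  rw [← Real.rpow_natCast x k, ← Real.rpow_mul hx, mul_inv_cancel₀ hkne, Real.rpow_one]

private lemma rpow_root (x t : ℝ) (hx : 0 ≤ x) (ht : 0 < t) : (x ^ t) ^ t⁻¹ = x := by
  rw [← Real.rpow_mul hx, mul_inv_cancel₀ ht.ne', Real.rpow_one]

private lemma bsup_nonneg (hA : ∀ i j, 0 ≤ A i j) (i : Fin n) (k : ℕ) :
    0 ≤ ⨆ j, maxPow A k j i :=
  (maxPow_nonneg hA k i i).trans (le_csup' (fun j => maxPow A k j i) i)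

private lemma fsup_nonneg (hA : ∀ i j, 0 ≤ A i j) (i : Fin n) (t : ℝ) (k : ℕ) :
    0 ≤ ⨆ j, (hadPow A t ^ k) j i :=
  (hadPow_pow_nonneg hA t k i i).trans (le_csup' (fun j => (hadPow A t ^ k) j i) i)

private lemma bseq_nonneg (hA : ∀ i j, 0 ≤ A i j) (i : Fin n) (k : ℕ) : 0 ≤ bseq A i k :=
  Real.rpow_nonneg (bsup_nonneg hA i k) _

private lemma fseq_nonneg (hA : ∀ i j, 0 ≤ A i j) (i : Fin n) (t : ℝ) (k : ℕ) :
    0 ≤ fseq A i t k :=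
  Real.rpow_nonneg (fsup_nonneg hA i t k) _

private lemma bseq_le_C (hA : ∀ i j, 0 ≤ A i j) (i : Fin n) {k : ℕ} (hk : 1 ≤ k) :
    bseq A i k ≤ 1 ⊔ matNorm A := by
  haveI : Nonempty (Fin n) := ⟨i⟩
  set C : ℝ := 1 ⊔ matNorm A with hCdef
  have hC1 : (1:ℝ) ≤ C := le_max_left _ _
  have hC0 : (0:ℝ) ≤ C := zero_le_one.trans hC1
  have hCA : ∀ j l, A j l ≤ C := by
    intro j l
    calc A j l ≤ ⨆ l', A j l' := le_csup' (fun l' => A j l') l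
      _ ≤ matNorm A := le_csup' (fun j' => ⨆ l', A j' l') j
      _ ≤ C := le_max_right _ _
  have h1 : (⨆ j, maxPow A k j i) ≤ C ^ k := ciSup_le fun j => maxPow_le hA hC1 hCA k j i
  calc bseq A i k ≤ (C ^ k) ^ ((k:ℝ)⁻¹) :=
        Real.rpow_le_rpow (bsup_nonneg hA i k) h1 (by positivity)
    _ = C := pow_root C hC0 hk

private lemma bseq_bdd (hA : ∀ i j, 0 ≤ A i j) (i : Fin n) :
    Filter.atTop.IsBoundedUnder (· ≤ ·) (bseq A i) :=
  ⟨1 ⊔ matNorm A, eventually_map.mpr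
    (by filter_upwards [eventually_ge_atTop 1] with k hk using bseq_le_C hA i hk)⟩

private lemma bseq_cobdd (hA : ∀ i j, 0 ≤ A i j) (i : Fin n) :
    Filter.atTop.IsCoboundedUnder (· ≤ ·) (bseq A i) :=
  Filter.isCoboundedUnder_le_of_le Filter.atTop (bseq_nonneg hA i)

/-- K1: `b k ^ t ≤ f t k` for `k ≥ 1`. -/
private lemma K1 (hA : ∀ i j, 0 ≤ A i j) (i : Fin n) {t : ℝ} (ht : 0 < t) {k : ℕ}
    (hk : 1 ≤ k) : bseq A i k ^ t ≤ fseq A i t k := by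
  haveI : Nonempty (Fin n) := ⟨i⟩
  have h1 : (⨆ j, maxPow A k j i) ^ t ≤ ⨆ j, (hadPow A t ^ k) j i := by
    obtain ⟨j, hj⟩ := csup_attained' (fun j => maxPow A k j i)
    rw [hj]
    exact (maxPow_rpow_le hA ht k j i).trans (le_csup' (fun j => (hadPow A t ^ k) j i) j)
  calc bseq A i k ^ t = ((⨆ j, maxPow A k j i) ^ t) ^ ((k:ℝ)⁻¹) :=
        rpow_swap _ _ _ (bsup_nonneg hA i k)
    _ ≤ (⨆ j, (hadPow A t ^ k) j i) ^ ((k:ℝ)⁻¹) :=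
        Real.rpow_le_rpow (Real.rpow_nonneg (bsup_nonneg hA i k) t) h1 (by positivity)
    _ = fseq A i t k := rfl

/-- K2: `f t k ≤ n * b k ^ t` for `k ≥ 1`. -/
private lemma K2 (hA : ∀ i j, 0 ≤ A i j) (i : Fin n) {t : ℝ} (ht : 0 < t) {k : ℕ}
    (hk : 1 ≤ k) : fseq A i t k ≤ (n:ℝ) * bseq A i k ^ t := by
  haveI : Nonempty (Fin n) := ⟨i⟩
  have hn0 : (0:ℝ) ≤ (n:ℝ) := Nat.cast_nonneg n
  have h1 : (⨆ j, (hadPow A t ^ k) j i) ≤ (n:ℝ) ^ k * (⨆ j, maxPow A k j i) ^ t := by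
    apply ciSup_le
    intro j
    calc (hadPow A t ^ k) j i ≤ (n:ℝ) ^ k * maxPow A k j i ^ t := hadPow_pow_le hA ht k j i
      _ ≤ (n:ℝ) ^ k * (⨆ j', maxPow A k j' i) ^ t := by
          apply mul_le_mul_of_nonneg_left _ (by positivity)
          exact Real.rpow_le_rpow (maxPow_nonneg hA k j i)
            (le_csup' (fun j' => maxPow A k j' i) j) ht.le
  calc fseq A i t k ≤ ((n:ℝ) ^ k * (⨆ j, maxPow A k j i) ^ t) ^ ((k:ℝ)⁻¹) :=
        Real.rpow_le_rpow (fsup_nonneg hA i t k) h1 (by positivity)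
    _ = ((n:ℝ) ^ k) ^ ((k:ℝ)⁻¹) * (((⨆ j, maxPow A k j i) ^ t) ^ ((k:ℝ)⁻¹)) :=
        Real.mul_rpow (by positivity) (Real.rpow_nonneg (bsup_nonneg hA i k) t)
    _ = (n:ℝ) * bseq A i k ^ t := by
        rw [pow_root _ hn0 hk, rpow_swap _ t _ (bsup_nonneg hA i k)]; rfl

/-- K3: `f t k ≤ (f s k) ^ (t/s)` for `0 < s ≤ t`. -/
private lemma K3 (hA : ∀ i j, 0 ≤ A i j) (i : Fin n) {s t : ℝ} (hs : 0 < s) (hst : s ≤ t)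
    (k : ℕ) : fseq A i t k ≤ fseq A i s k ^ (t / s) := by
  haveI : Nonempty (Fin n) := ⟨i⟩
  have hr0 : (0:ℝ) < t / s := lt_of_lt_of_le one_pos ((one_le_div hs).2 hst)
  have h1 : (⨆ j, (hadPow A t ^ k) j i) ≤ (⨆ j, (hadPow A s ^ k) j i) ^ (t / s) := by
    obtain ⟨j, hj⟩ := csup_attained' (fun j => (hadPow A t ^ k) j i)
    rw [hj]
    exact (hadPow_pow_anti hA hs hst k j i).trans
      (Real.rpow_le_rpow (hadPow_pow_nonneg hA s k j i)
        (le_csup' (fun j' => (hadPow A s ^ k) j' i) j) hr0.le)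
  calc fseq A i t k ≤ ((⨆ j, (hadPow A s ^ k) j i) ^ (t / s)) ^ ((k:ℝ)⁻¹) :=
        Real.rpow_le_rpow (fsup_nonneg hA i t k) h1 (by positivity)
    _ = fseq A i s k ^ (t / s) := rpow_swap _ _ _ (fsup_nonneg hA i s k)

private lemma fseq_bdd (hA : ∀ i j, 0 ≤ A i j) (i : Fin n) {t : ℝ} (ht : 0 < t) :
    Filter.atTop.IsBoundedUnder (· ≤ ·) (fseq A i t) := by
  have hC0 : (0:ℝ) ≤ 1 ⊔ matNorm A := zero_le_one.trans (le_max_left _ _)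
  refine ⟨(n:ℝ) * (1 ⊔ matNorm A) ^ t, eventually_map.mpr ?_⟩
  filter_upwards [eventually_ge_atTop 1] with k hk
  calc fseq A i t k ≤ (n:ℝ) * bseq A i k ^ t := K2 hA i ht hk
    _ ≤ (n:ℝ) * (1 ⊔ matNorm A) ^ t := by
        apply mul_le_mul_of_nonneg_left _ (Nat.cast_nonneg n)
        exact Real.rpow_le_rpow (bseq_nonneg hA i k) (bseq_le_C hA i hk) ht.le

private lemma fseq_cobdd (hA : ∀ i j, 0 ≤ A i j) (i : Fin n) (t : ℝ) :
    Filter.atTop.IsCoboundedUnder (· ≤ ·) (fseq A i t) :=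
  Filter.isCoboundedUnder_le_of_le Filter.atTop (fseq_nonneg hA i t)

private lemma rloc_nonneg (hA : ∀ i j, 0 ≤ A i j) (i : Fin n) : 0 ≤ rloc A (e i) := by
  rw [rloc_eq_b hA i]
  exact Filter.le_limsup_of_frequently_le
    ((Filter.Eventually.of_forall (bseq_nonneg hA i)).frequently) (bseq_bdd hA i)

private lemma rhox_nonneg (hA : ∀ i j, 0 ≤ A i j) (i : Fin n) {t : ℝ} (ht : 0 < t) :
    0 ≤ rhox (hadPow A t) (e i) := by
  rw [rhox_eq_f i t]
  exact Filter.le_limsup_of_frequently_le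
    ((Filter.Eventually.of_forall (fseq_nonneg hA i t)).frequently) (fseq_bdd hA i ht)

/-- M1: `r ^ t ≤ ρ t`. -/
private lemma M1 (hA : ∀ i j, 0 ≤ A i j) (i : Fin n) {t : ℝ} (ht : 0 < t) :
    rloc A (e i) ^ t ≤ rhox (hadPow A t) (e i) := by
  rcases eq_or_lt_of_le (rloc_nonneg hA i) with h0 | h0
  · rw [← h0, Real.zero_rpow ht.ne']
    exact rhox_nonneg hA i ht
  · have key : ∀ ε : ℝ, 0 < ε → ε < rloc A (e i) →
        (rloc A (e i) - ε) ^ t ≤ rhox (hadPow A t) (e i) := by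
      intro ε hε hεr
      have h1 : rloc A (e i) - ε < Filter.atTop.limsup (bseq A i) := by
        rw [← rloc_eq_b hA i]; linarith
      have h2 := Filter.frequently_lt_of_lt_limsup (bseq_cobdd hA i) h1
      rw [rhox_eq_f i t]
      refine Filter.le_limsup_of_frequently_le ?_ (fseq_bdd hA i ht)
      refine (h2.and_eventually (eventually_ge_atTop 1)).mono ?_
      rintro k ⟨hk, hk1⟩
      calc (rloc A (e i) - ε) ^ t ≤ bseq A i k ^ t :=
            Real.rpow_le_rpow (by linarith) hk.le ht.le
        _ ≤ fseq A i t k := K1 hA i ht hk1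
    have hcont : Filter.Tendsto (fun ε : ℝ => (rloc A (e i) - ε) ^ t)
        (nhdsWithin 0 (Set.Ioi 0)) (nhds (rloc A (e i) ^ t)) := by
      have h2 : Filter.Tendsto (fun ε : ℝ => rloc A (e i) - ε) (nhdsWithin 0 (Set.Ioi 0))
          (nhds (rloc A (e i))) := by
        have h3 : Filter.Tendsto (fun ε : ℝ => rloc A (e i) - ε) (nhds 0)
            (nhds (rloc A (e i) - 0)) :=
          (continuous_const.sub continuous_id).tendsto 0
        rw [sub_zero] at h3
        exact h3.mono_left nhdsWithin_le_nhds
      exact (Real.continuousAt_rpow_const (rloc A (e i)) t (Or.inr ht.le)).tendsto.comp h2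
    refine le_of_tendsto hcont ?_
    filter_upwards [self_mem_nhdsWithin,
      mem_nhdsWithin_of_mem_nhds (Iio_mem_nhds h0)] with ε hε hε'
    exact key ε hε hε'

/-- M2: `ρ t ≤ n * r ^ t`. -/
private lemma M2 (hA : ∀ i j, 0 ≤ A i j) (i : Fin n) {t : ℝ} (ht : 0 < t) :
    rhox (hadPow A t) (e i) ≤ (n:ℝ) * rloc A (e i) ^ t := by
  have key : ∀ ε : ℝ, 0 < ε → rhox (hadPow A t) (e i) ≤ (n:ℝ) * (rloc A (e i) + ε) ^ t := by
    intro ε hε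
    have h1 : Filter.atTop.limsup (bseq A i) < rloc A (e i) + ε := by
      rw [← rloc_eq_b hA i]; linarith
    have h2 := Filter.eventually_lt_of_limsup_lt h1 (bseq_bdd hA i)
    rw [rhox_eq_f i t]
    refine Filter.limsup_le_of_le (fseq_cobdd hA i t) ?_
    filter_upwards [h2, eventually_ge_atTop 1] with k hk hk1
    calc fseq A i t k ≤ (n:ℝ) * bseq A i k ^ t := K2 hA i ht hk1
      _ ≤ (n:ℝ) * (rloc A (e i) + ε) ^ t := by
          apply mul_le_mul_of_nonneg_left _ (Nat.cast_nonneg n)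
          exact Real.rpow_le_rpow (bseq_nonneg hA i k) hk.le ht.le
  have hcont : Filter.Tendsto (fun ε : ℝ => (n:ℝ) * (rloc A (e i) + ε) ^ t)
      (nhdsWithin 0 (Set.Ioi 0)) (nhds ((n:ℝ) * rloc A (e i) ^ t)) := by
    have h2 : Filter.Tendsto (fun ε : ℝ => rloc A (e i) + ε) (nhdsWithin 0 (Set.Ioi 0))
        (nhds (rloc A (e i))) := by
      have h3 : Filter.Tendsto (fun ε : ℝ => rloc A (e i) + ε) (nhds 0)
          (nhds (rloc A (e i) + 0)) :=
        (continuous_const.add continuous_id).tendsto 0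
      rw [add_zero] at h3
      exact h3.mono_left nhdsWithin_le_nhds
    exact ((continuousAt_const.mul
      (Real.continuousAt_rpow_const (rloc A (e i)) t (Or.inr ht.le))).tendsto).comp h2
  refine ge_of_tendsto hcont ?_
  filter_upwards [self_mem_nhdsWithin] with ε hε
  exact key ε hε

/-- M3: `ρ t ≤ ρ s ^ (t / s)` for `0 < s ≤ t`. -/
private lemma M3 (hA : ∀ i j, 0 ≤ A i j) (i : Fin n) {s t : ℝ} (hs : 0 < s) (hst : s ≤ t) :
    rhox (hadPow A t) (e i) ≤ rhox (hadPow A s) (e i) ^ (t / s) := by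
  have ht : (0:ℝ) < t := lt_of_lt_of_le hs hst
  have hr0 : (0:ℝ) < t / s := lt_of_lt_of_le one_pos ((one_le_div hs).2 hst)
  have key : ∀ ε : ℝ, 0 < ε → rhox (hadPow A t) (e i) ≤ (rhox (hadPow A s) (e i) + ε) ^ (t / s) := by
    intro ε hε
    have h1 : Filter.atTop.limsup (fseq A i s) < rhox (hadPow A s) (e i) + ε := by
      rw [← rhox_eq_f i s]; linarith
    have h2 := Filter.eventually_lt_of_limsup_lt h1 (fseq_bdd hA i hs)
    rw [rhox_eq_f i t]
    refine Filter.limsup_le_of_le (fseq_cobdd hA i t) ?_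
    filter_upwards [h2] with k hk
    calc fseq A i t k ≤ fseq A i s k ^ (t / s) := K3 hA i hs hst k
      _ ≤ (rhox (hadPow A s) (e i) + ε) ^ (t / s) :=
          Real.rpow_le_rpow (fseq_nonneg hA i s k) hk.le hr0.le
  have hcont : Filter.Tendsto (fun ε : ℝ => (rhox (hadPow A s) (e i) + ε) ^ (t / s))
      (nhdsWithin 0 (Set.Ioi 0)) (nhds (rhox (hadPow A s) (e i) ^ (t / s))) := by
    have h2 : Filter.Tendsto (fun ε : ℝ => rhox (hadPow A s) (e i) + ε)
        (nhdsWithin 0 (Set.Ioi 0)) (nhds (rhox (hadPow A s) (e i))) := by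
      have h3 : Filter.Tendsto (fun ε : ℝ => rhox (hadPow A s) (e i) + ε) (nhds 0) (nhds (rhox (hadPow A s) (e i) + 0)) :=
        (continuous_const.add continuous_id).tendsto 0
      rw [add_zero] at h3
      exact h3.mono_left nhdsWithin_le_nhds
    exact ((Real.continuousAt_rpow_const (rhox (hadPow A s) (e i)) (t / s) (Or.inr hr0.le)).tendsto).comp h2
  refine ge_of_tendsto hcont ?_
  filter_upwards [self_mem_nhdsWithin] with ε hε
  exact key ε hε

end StmtMid


/-- `t ↦ ρ_{e_i}(A^{(t)})^{1/t}` is decreasing on `(0,∞)`, and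
`r_{e_i}(A) = inf_{t>0} ρ_{e_i}(A^{(t)})^{1/t} = sup_{t>0} (n⁻¹ ρ_{e_i}(A^{(t)}))^{1/t}`. -/
theorem stmt4 {n : ℕ} (A : Matrix (Fin n) (Fin n) ℝ) (hA : ∀ i j, 0 ≤ A i j)
    (i : Fin n) :
    AntitoneOn (fun t : ℝ => (rhox (hadPow A t) (e i)) ^ t⁻¹) (Set.Ioi 0) ∧
    rloc A (e i) = ⨅ t : Set.Ioi (0 : ℝ), (rhox (hadPow A (t : ℝ)) (e i)) ^ (t : ℝ)⁻¹ ∧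
    rloc A (e i) =
      ⨆ t : Set.Ioi (0 : ℝ), ((n : ℝ)⁻¹ * rhox (hadPow A (t : ℝ)) (e i)) ^ (t : ℝ)⁻¹ := by
  
  haveI : Nonempty (Fin n) := ⟨i⟩
  haveI : Nonempty (Set.Ioi (0:ℝ)) := ⟨⟨1, Set.mem_Ioi.mpr one_pos⟩⟩
  have hn0 : 0 < n := i.pos
  have hnpos : (0:ℝ) < (n:ℝ) := by exact_mod_cast hn0
  have hr0 : 0 ≤ rloc A (e i) := rloc_nonneg hA i
  -- key comparison facts
  have r_le_g : ∀ t : ℝ, 0 < t → rloc A (e i) ≤ rhox (hadPow A t) (e i) ^ t⁻¹ := by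
    intro t ht
    have h1 := Real.rpow_le_rpow (Real.rpow_nonneg hr0 t) (M1 hA i ht) (inv_nonneg.2 ht.le)
    rwa [rpow_root _ t hr0 ht] at h1
  have g_le : ∀ t : ℝ, 0 < t →
      rhox (hadPow A t) (e i) ^ t⁻¹ ≤ (n:ℝ) ^ t⁻¹ * rloc A (e i) := by
    intro t ht
    have h1 := Real.rpow_le_rpow (rhox_nonneg hA i ht) (M2 hA i ht) (inv_nonneg.2 ht.le)
    rwa [Real.mul_rpow hnpos.le (Real.rpow_nonneg hr0 t), rpow_root _ t hr0 ht] at h1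
  have h_le_r : ∀ t : ℝ, 0 < t →
      ((n:ℝ)⁻¹ * rhox (hadPow A t) (e i)) ^ t⁻¹ ≤ rloc A (e i) := by
    intro t ht
    have h1 : (n:ℝ)⁻¹ * rhox (hadPow A t) (e i) ≤ rloc A (e i) ^ t := by
      have h2 := mul_le_mul_of_nonneg_left (M2 hA i ht) (inv_nonneg.2 hnpos.le)
      rwa [← mul_assoc, inv_mul_cancel₀ hnpos.ne', one_mul] at h2
    have h3 := Real.rpow_le_rpow
      (mul_nonneg (inv_nonneg.2 hnpos.le) (rhox_nonneg hA i ht)) h1 (inv_nonneg.2 ht.le)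
    rwa [rpow_root _ t hr0 ht] at h3
  have r_le_h : ∀ t : ℝ, 0 < t →
      ((n:ℝ)⁻¹) ^ t⁻¹ * rloc A (e i) ≤ ((n:ℝ)⁻¹ * rhox (hadPow A t) (e i)) ^ t⁻¹ := by
    intro t ht
    have h1 : (n:ℝ)⁻¹ * rloc A (e i) ^ t ≤ (n:ℝ)⁻¹ * rhox (hadPow A t) (e i) :=
      mul_le_mul_of_nonneg_left (M1 hA i ht) (inv_nonneg.2 hnpos.le)
    have h2 := Real.rpow_le_rpow
      (mul_nonneg (inv_nonneg.2 hnpos.le) (Real.rpow_nonneg hr0 t)) h1 (inv_nonneg.2 ht.le)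
    rwa [Real.mul_rpow (inv_nonneg.2 hnpos.le) (Real.rpow_nonneg hr0 t),
      rpow_root _ t hr0 ht] at h2
  refine ⟨?_, ?_, ?_⟩
  · -- antitone
    intro s hs t ht hst
    have hs0 : (0:ℝ) < s := hs
    have ht0 : (0:ℝ) < t := ht
    simp only
    have h := M3 hA i hs0 hst
    have h2 := Real.rpow_le_rpow (rhox_nonneg hA i ht0) h (inv_nonneg.2 ht0.le)
    have h3 : (rhox (hadPow A s) (e i) ^ (t / s)) ^ t⁻¹ = rhox (hadPow A s) (e i) ^ s⁻¹ := by
      rw [← Real.rpow_mul (rhox_nonneg hA i hs0)]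
      congr 1
      field_simp
    rwa [h3] at h2
  · -- infimum
    have hlb : ∀ t : Set.Ioi (0:ℝ), rloc A (e i) ≤ rhox (hadPow A (t:ℝ)) (e i) ^ (t:ℝ)⁻¹ :=
      fun t => r_le_g (t:ℝ) t.2
    refine le_antisymm (le_ciInf hlb) ?_
    have hbdd : BddBelow (Set.range fun t : Set.Ioi (0:ℝ) =>
        rhox (hadPow A (t:ℝ)) (e i) ^ (t:ℝ)⁻¹) := by
      refine ⟨rloc A (e i), ?_⟩
      rintro x ⟨t, rfl⟩
      exact hlb t
    have hlim : Filter.Tendsto (fun t : ℝ => (n:ℝ) ^ t⁻¹ * rloc A (e i))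
        Filter.atTop (nhds (rloc A (e i))) := by
      have h1 : Filter.Tendsto (fun t : ℝ => t⁻¹) Filter.atTop (nhds 0) :=
        tendsto_inv_atTop_zero
      have h2 : ContinuousAt (fun y : ℝ => (n:ℝ) ^ y * rloc A (e i)) 0 :=
        (Real.continuousAt_const_rpow hnpos.ne').mul continuousAt_const
      have h3 := h2.tendsto.comp h1
      rw [Function.comp_def] at h3
      simpa [Real.rpow_zero] using h3
    refine ge_of_tendsto hlim ?_
    filter_upwards [eventually_gt_atTop 0] with t ht
    exact le_trans (ciInf_le hbdd ⟨t, ht⟩) (g_le t ht)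
  · -- supremum
    have hub : ∀ t : Set.Ioi (0:ℝ),
        ((n:ℝ)⁻¹ * rhox (hadPow A (t:ℝ)) (e i)) ^ (t:ℝ)⁻¹ ≤ rloc A (e i) :=
      fun t => h_le_r (t:ℝ) t.2
    refine le_antisymm ?_ (ciSup_le hub)
    have hbdd : BddAbove (Set.range fun t : Set.Ioi (0:ℝ) =>
        ((n:ℝ)⁻¹ * rhox (hadPow A (t:ℝ)) (e i)) ^ (t:ℝ)⁻¹) := by
      refine ⟨rloc A (e i), ?_⟩
      rintro x ⟨t, rfl⟩
      exact hub t
    have hlim : Filter.Tendsto (fun t : ℝ => ((n:ℝ)⁻¹) ^ t⁻¹ * rloc A (e i))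
        Filter.atTop (nhds (rloc A (e i))) := by
      have h1 : Filter.Tendsto (fun t : ℝ => t⁻¹) Filter.atTop (nhds 0) :=
        tendsto_inv_atTop_zero
      have h2 : ContinuousAt (fun y : ℝ => ((n:ℝ)⁻¹) ^ y * rloc A (e i)) 0 :=
        (Real.continuousAt_const_rpow (inv_ne_zero hnpos.ne')).mul continuousAt_const
      have h3 := h2.tendsto.comp h1
      rw [Function.comp_def] at h3
      simpa [Real.rpow_zero] using h3
    refine le_of_tendsto hlim ?_
    filter_upwards [eventually_gt_atTop 0] with t ht
    exact le_trans (r_le_h t ht) (le_ciSup hbdd ⟨t, ht⟩)
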